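/- arXiv:2210.13208 — 6 statements merged into one kernel-verified Lean document; each statement's English description precedes it below -/
import Mathlib

section
/- For T ∈ B_{A^{1/2}}(H) and λ ∈ [0,1], the inequality 2√(λ(1−λ))·c_A(T)·‖T‖_A ≤ ‖T‖_{(A,λ)}² holds, where c_A(T) = inf{|⟨Tx,x⟩_A| : ‖x‖_A = 1} is the A-Crawford number. -/
open Filter Topology

variable {H : Type*}

/-- The `A`-semi-inner product, paper convention (linear in the first argument):
`⟨x, y⟩_A = ⟨Ax, y⟩`. -/
noncomputable def innA [NormedAddCommGroup H] [InnerProductSpace ℂ H]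
    (A : H →L[ℂ] H) (x y : H) : ℂ :=
  @inner ℂ H _ y (A x)

/-- The seminorm `‖x‖_A = √⟨Ax, x⟩`. -/
noncomputable def normA [NormedAddCommGroup H] [InnerProductSpace ℂ H]
    (A : H →L[ℂ] H) (x : H) : ℝ :=
  Real.sqrt (innA A x x).re

/-- The quantity `√(λ‖Tx‖_A² + (1−λ)|⟨Tx,x⟩_A|²)`. -/
noncomputable def qA [NormedAddCommGroup H] [InnerProductSpace ℂ H]
    (A : H →L[ℂ] H) (l : ℝ) (T : H →L[ℂ] H) (x : H) : ℝ :=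
  Real.sqrt (l * normA A (T x) ^ 2 + (1 - l) * ‖innA A (T x) x‖ ^ 2)

/-- The seminorm `‖T‖_{(A,λ)}`. -/
noncomputable def semNormA [NormedAddCommGroup H] [InnerProductSpace ℂ H]
    (A : H →L[ℂ] H) (l : ℝ) (T : H →L[ℂ] H) : ℝ :=
  sSup {r : ℝ | ∃ x : H, normA A x = 1 ∧ r = qA A l T x}

/-- The `A`-operator seminorm `‖T‖_A`. -/
noncomputable def opNormA [NormedAddCommGroup H] [InnerProductSpace ℂ H]
    (A : H →L[ℂ] H) (T : H →L[ℂ] H) : ℝ :=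
  sSup {r : ℝ | ∃ x : H, normA A x = 1 ∧ r = normA A (T x)}

/-- The `A`-Crawford number `c_A(T)`. -/
noncomputable def crawfordA [NormedAddCommGroup H] [InnerProductSpace ℂ H]
    (A : H →L[ℂ] H) (T : H →L[ℂ] H) : ℝ :=
  sInf {r : ℝ | ∃ x : H, normA A x = 1 ∧ r = ‖innA A (T x) x‖}

/-!
Writing `⟨x, y⟩_A = ⟨√A y, √A x⟩` turns the `A`-seminorm into an honest norm of `√A x`, so
Cauchy–Schwarz gives `|⟨Tx, x⟩_A| ≤ ‖Tx‖_A` for `‖x‖_A = 1`; this bounds the supremum defining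
`‖T‖_{(A,λ)}`. For each such `x`, AM–GM with `a = ‖Tx‖_A` and `b = |⟨Tx, x⟩_A| ≥ c_A(T)` gives
`2√(λ(1−λ)) c_A(T) a ≤ λa² + (1−λ)b² ≤ ‖T‖_{(A,λ)}²`, and taking the supremum over `x` concludes.
-/

open scoped InnerProductSpace

section

variable [NormedAddCommGroup H] [InnerProductSpace ℂ H]

lemma normA_nonneg (A : H →L[ℂ] H) (x : H) : 0 ≤ normA A x := Real.sqrt_nonneg _

lemma crawfordA_nonneg (A T : H →L[ℂ] H) : 0 ≤ crawfordA A T :=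
  Real.sInf_nonneg fun _ ⟨_, _, hr⟩ => hr ▸ norm_nonneg _

lemma crawfordA_le {A : H →L[ℂ] H} (T : H →L[ℂ] H) {x : H} (hx : normA A x = 1) :
    crawfordA A T ≤ ‖innA A (T x) x‖ :=
  csInf_le ⟨0, fun _ ⟨_, _, hr⟩ => hr ▸ norm_nonneg _⟩ ⟨x, hx, rfl⟩

lemma sq_qA (A : H →L[ℂ] H) {l : ℝ} (hl : l ∈ Set.Icc (0 : ℝ) 1) (T : H →L[ℂ] H) (x : H) :
    qA A l T x ^ 2 = l * normA A (T x) ^ 2 + (1 - l) * ‖innA A (T x) x‖ ^ 2 :=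
  Real.sq_sqrt <| add_nonneg (mul_nonneg hl.1 (sq_nonneg _))
    (mul_nonneg (sub_nonneg.2 hl.2) (sq_nonneg _))

end

lemma two_mul_sqrt_mul_mul_mul_le {l m : ℝ} (hl : 0 ≤ l) (hm : 0 ≤ m) (a b : ℝ) :
    2 * √(l * m) * b * a ≤ l * a ^ 2 + m * b ^ 2 := by
  rw [Real.sqrt_mul hl]
  nlinarith [sq_nonneg (√l * a - √m * b), Real.sq_sqrt hl, Real.sq_sqrt hm]

section

variable [NormedAddCommGroup H] [InnerProductSpace ℂ H] [CompleteSpace H]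
  {A : H →L[ℂ] H}

lemma innA_eq_inner_sqrt (hA : A.IsPositive) (x y : H) :
    innA A x y = ⟪CFC.sqrt A y, CFC.sqrt A x⟫_ℂ := by
  have hA' : 0 ≤ A := (ContinuousLinearMap.nonneg_iff_isPositive A).2 hA
  have hsq : A x = CFC.sqrt A (CFC.sqrt A x) :=
    (DFunLike.congr_fun (CFC.sqrt_mul_sqrt_self A hA') x).symm
  rw [innA, hsq]
  exact ((IsSelfAdjoint.of_nonneg (CFC.sqrt_nonneg A)).isSymmetric y _).symm

lemma normA_eq_norm_sqrt (hA : A.IsPositive) (x : H) : normA A x = ‖CFC.sqrt A x‖ := by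
  rw [normA, innA_eq_inner_sqrt hA, ← Real.sqrt_sq (norm_nonneg (CFC.sqrt A x))]
  exact congrArg Real.sqrt (inner_self_eq_norm_sq (𝕜 := ℂ) _)

lemma norm_innA_le (hA : A.IsPositive) (x y : H) :
    ‖innA A x y‖ ≤ normA A x * normA A y := by
  rw [innA_eq_inner_sqrt hA, normA_eq_norm_sqrt hA, normA_eq_norm_sqrt hA, mul_comm]
  exact norm_inner_le_norm _ _

lemma qA_le_normA_apply (hA : A.IsPositive) {l : ℝ} (hl : l ∈ Set.Icc (0 : ℝ) 1)
    (T : H →L[ℂ] H) {x : H} (hx : normA A x = 1) : qA A l T x ≤ normA A (T x) := by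
  have hcs : ‖innA A (T x) x‖ ≤ normA A (T x) := by
    simpa [hx] using norm_innA_le hA (T x) x
  have hcs_sq : ‖innA A (T x) x‖ ^ 2 ≤ normA A (T x) ^ 2 := by gcongr
  refine Real.sqrt_le_iff.2 ⟨normA_nonneg A _, ?_⟩
  nlinarith [hl.1, hl.2]

lemma bddAbove_qA (hA : A.IsPositive) {l : ℝ} (hl : l ∈ Set.Icc (0 : ℝ) 1) {T : H →L[ℂ] H}
    (hT : BddAbove {r : ℝ | ∃ x : H, normA A x = 1 ∧ r = normA A (T x)}) :
    BddAbove {r : ℝ | ∃ x : H, normA A x = 1 ∧ r = qA A l T x} := by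
  obtain ⟨M, hM⟩ := hT
  exact ⟨M, fun _ ⟨x, hx, hr⟩ =>
    hr ▸ (qA_le_normA_apply hA hl T hx).trans (hM ⟨x, hx, rfl⟩)⟩

lemma crawfordA_mul_normA_apply_le (hA : A.IsPositive) {l : ℝ} (hl : l ∈ Set.Icc (0 : ℝ) 1)
    {T : H →L[ℂ] H} (hT : BddAbove {r : ℝ | ∃ x : H, normA A x = 1 ∧ r = normA A (T x)})
    {x : H} (hx : normA A x = 1) :
    2 * √(l * (1 - l)) * crawfordA A T * normA A (T x) ≤ semNormA A l T ^ 2 := by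
  have hq : qA A l T x ≤ semNormA A l T := le_csSup (bddAbove_qA hA hl hT) ⟨x, hx, rfl⟩
  calc 2 * √(l * (1 - l)) * crawfordA A T * normA A (T x)
      ≤ 2 * √(l * (1 - l)) * ‖innA A (T x) x‖ * normA A (T x) := by
        gcongr
        · exact normA_nonneg A _
        · exact crawfordA_le T hx
    _ ≤ l * normA A (T x) ^ 2 + (1 - l) * ‖innA A (T x) x‖ ^ 2 :=
        two_mul_sqrt_mul_mul_mul_le hl.1 (sub_nonneg.2 hl.2) _ _
    _ = qA A l T x ^ 2 := (sq_qA A hl T x).symm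
    _ ≤ semNormA A l T ^ 2 := pow_le_pow_left₀ (Real.sqrt_nonneg _) hq 2

end

theorem crawford_mul_opNorm_le_sq_semNormA
    [NormedAddCommGroup H] [InnerProductSpace ℂ H] [CompleteSpace H]
    (A : H →L[ℂ] H) (hA : A.IsPositive) {l : ℝ} (hl : l ∈ Set.Icc (0 : ℝ) 1)
    (T : H →L[ℂ] H) (hT : BddAbove {r : ℝ | ∃ x : H, normA A x = 1 ∧ r = normA A (T x)}) :
    2 * Real.sqrt (l * (1 - l)) * crawfordA A T * opNormA A T ≤ semNormA A l T ^ 2 := by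
  have hk : 0 ≤ 2 * √(l * (1 - l)) * crawfordA A T := by
    have := crawfordA_nonneg A T
    positivity
  rw [opNormA, ← smul_eq_mul, ← Real.sSup_smul_of_nonneg hk]
  refine Real.sSup_le ?_ (sq_nonneg _)
  rintro _ ⟨_, ⟨x, hx, rfl⟩, rfl⟩
  exact crawfordA_mul_normA_apply_le hA hl hT hx
end

section
/- For every x ∈ H with ‖x‖_A = 1 and T, S ∈ B_{A^{1/2}}(H), λ ∈ [0,1], one has |λ⟨Sx, Tx⟩_A + (1−λ)⟨x, Tx⟩_A⟨Sx, x⟩_A|² ≤ (λ‖Tx‖_A² + (1−λ)|⟨Tx,x⟩_A|²)·(λ‖Sx‖_A² + (1−λ)|⟨Sx,x⟩_A|²). -/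
/-!
A positive operator `A` makes `⟨x, y⟩_A` a semi-inner product, so Cauchy–Schwarz gives
`|⟨Sx, Tx⟩_A| ≤ ‖Sx‖_A ‖Tx‖_A`, and `|⟨x, Tx⟩_A| = |⟨Tx, x⟩_A|` by symmetry. The triangle
inequality then bounds the left-hand side by `λ a c + (1 − λ) b d` with `a = ‖Tx‖_A`,
`b = |⟨Tx, x⟩_A|`, `c = ‖Sx‖_A`, `d = |⟨Sx, x⟩_A|`, and Cauchy–Schwarz in `ℝ²` for the vectors
`(√λ a, √(1 − λ) b)` and `(√λ c, √(1 − λ) d)` finishes the proof.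
-/

open Filter Topology

variable {H : Type*}

namespace ContinuousLinearMap.IsPositive

variable [NormedAddCommGroup H] [InnerProductSpace ℂ H] {A : H →L[ℂ] H}

/-- In Mathlib's convention `⟪u, A v⟫` is conjugate-linear in `u`, so `innA A x y` is the
inner product of `y` and `x` in this core. -/
noncomputable abbrev preInnerProductCore (hA : A.IsPositive) : PreInnerProductSpace.Core ℂ H where
  inner u v := inner ℂ u (A v)
  conj_inner_symm u v := by
    rw [inner_conj_symm, ← hA.inner_left_eq_inner_right]
  re_inner_nonneg u := hA.re_inner_nonneg_right u
  add_left _ _ _ := inner_add_left _ _ _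
  smul_left _ _ _ := inner_smul_left _ _ _

theorem norm_innA_le (hA : A.IsPositive) (u v : H) :
    ‖innA A u v‖ ≤ normA A u * normA A v :=
  (InnerProductSpace.Core.norm_inner_le_norm (c := hA.preInnerProductCore) v u).trans_eq
    (mul_comm _ _)

theorem norm_innA_comm (hA : A.IsPositive) (u v : H) :
    ‖innA A u v‖ = ‖innA A v u‖ :=
  InnerProductSpace.Core.norm_inner_symm (c := hA.preInnerProductCore) v u

end ContinuousLinearMap.IsPositive

theorem Complex.norm_ofReal_mul_add_one_sub_mul_le {l : ℝ} (hl : l ∈ Set.Icc (0 : ℝ) 1)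
    (z w : ℂ) : ‖(l : ℂ) * z + (1 - l) * w‖ ≤ l * ‖z‖ + (1 - l) * ‖w‖ := by
  have h1l : (1 : ℂ) - l = ((1 - l : ℝ) : ℂ) := by push_cast; rfl
  calc ‖(l : ℂ) * z + (1 - l) * w‖ ≤ ‖(l : ℂ) * z‖ + ‖(1 - l : ℂ) * w‖ := norm_add_le _ _
    _ = l * ‖z‖ + (1 - l) * ‖w‖ := by
      rw [norm_mul, norm_mul, h1l, Complex.norm_of_nonneg hl.1,
        Complex.norm_of_nonneg (sub_nonneg.2 hl.2)]

theorem sq_mul_mul_add_mul_mul_le {p q : ℝ} (hp : 0 ≤ p) (hq : 0 ≤ q) (a b c d : ℝ) :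
    (p * (a * c) + q * (b * d)) ^ 2 ≤ (p * a ^ 2 + q * b ^ 2) * (p * c ^ 2 + q * d ^ 2) := by
  have key : (p * a ^ 2 + q * b ^ 2) * (p * c ^ 2 + q * d ^ 2) - (p * (a * c) + q * (b * d)) ^ 2
      = p * q * (a * d - b * c) ^ 2 := by ring
  linarith [mul_nonneg (mul_nonneg hp hq) (sq_nonneg (a * d - b * c))]

theorem abs_cross_sq_le_general
    [NormedAddCommGroup H] [InnerProductSpace ℂ H]
    (A : H →L[ℂ] H) (hA : A.IsPositive) {l : ℝ} (hl : l ∈ Set.Icc (0 : ℝ) 1)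
    (T S : H →L[ℂ] H)
    (x : H) :
    ‖(l : ℂ) * innA A (S (x)) (T (x)) + ((1 : ℂ) - (l : ℂ)) * innA A (x) (T (x)) * innA A (S (x)) (x)‖ ^ 2 ≤
      (l * normA A (T (x)) ^ 2 + (1 - l) * ‖innA A (T (x)) (x)‖ ^ 2) * (l * normA A (S (x)) ^ 2 + (1 - l) * ‖innA A (S (x)) (x)‖ ^ 2) := by
  have h1l : 0 ≤ 1 - l := sub_nonneg.2 hl.2
  have htriangle :
      ‖(l : ℂ) * innA A (S x) (T x) + (1 - l) * innA A x (T x) * innA A (S x) x‖ ≤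
        l * (normA A (T x) * normA A (S x)) + (1 - l) * (‖innA A (T x) x‖ * ‖innA A (S x) x‖) := by
    rw [mul_assoc (1 - (l : ℂ))]
    refine (Complex.norm_ofReal_mul_add_one_sub_mul_le hl _ _).trans ?_
    gcongr
    · exact hl.1
    · exact (hA.norm_innA_le _ _).trans_eq (mul_comm _ _)
    · rw [norm_mul, hA.norm_innA_comm]
  calc _ ≤ (l * (normA A (T x) * normA A (S x))
          + (1 - l) * (‖innA A (T x) x‖ * ‖innA A (S x) x‖)) ^ 2 :=
        pow_le_pow_left₀ (norm_nonneg _) htriangle 2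
    _ ≤ _ := sq_mul_mul_add_mul_mul_le hl.1 h1l _ _ _ _

theorem abs_cross_sq_le
    [NormedAddCommGroup H] [InnerProductSpace ℂ H] [CompleteSpace H]
    (A : H →L[ℂ] H) (hA : A.IsPositive) {l : ℝ} (hl : l ∈ Set.Icc (0 : ℝ) 1)
    (T S : H →L[ℂ] H) (hT : BddAbove {r : ℝ | ∃ x : H, normA A x = 1 ∧ r = normA A (T x)}) (hS : BddAbove {r : ℝ | ∃ x : H, normA A x = 1 ∧ r = normA A (S x)})
    (x : H) (hx : normA A x = 1) :
    ‖(l : ℂ) * innA A (S (x)) (T (x)) + ((1 : ℂ) - (l : ℂ)) * innA A (x) (T (x)) * innA A (S (x)) (x)‖ ^ 2 ≤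
      (l * normA A (T (x)) ^ 2 + (1 - l) * ‖innA A (T (x)) (x)‖ ^ 2) * (l * normA A (S (x)) ^ 2 + (1 - l) * ‖innA A (S (x)) (x)‖ ^ 2) :=
  abs_cross_sq_le_general A hA hl T S x
end

section
/- For bounded operators T, S on a complex Hilbert space H, the equality ‖T+S‖ = ‖T‖ + ‖S‖ holds if and only if there exists a sequence {x_n} of unit vectors in H with lim_{n→∞} ⟨Sx_n, Tx_n⟩ = ‖T‖·‖S‖. -/
/-!
For `‖x‖ ≤ 1` we have `‖(T + S) x‖² = ‖T x‖² + 2 Re ⟪T x, S x⟫ + ‖S x‖²`, and the three terms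
are bounded by `‖T‖²`, `2 ‖T‖ ‖S‖`, `‖S‖²`. Along unit vectors norming `T + S`, the equality
`‖T + S‖ = ‖T‖ + ‖S‖` therefore forces `Re ⟪T xₙ, S xₙ⟫ → ‖T‖ ‖S‖`; as `|⟪T xₙ, S xₙ⟫| ≤ ‖T‖ ‖S‖`,
the imaginary part dies in the limit. Conversely, `Re ⟪T xₙ, S xₙ⟫ → ‖T‖ ‖S‖` squeezes
`‖T xₙ‖ ‖S xₙ‖` to `‖T‖ ‖S‖`, hence `‖T xₙ‖ → ‖T‖` and `‖S xₙ‖ → ‖S‖` (when neither operator is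
zero), and the expansion gives `‖(T + S) xₙ‖ → ‖T‖ + ‖S‖`.
-/

open Filter Topology Metric

theorem ContinuousLinearMap.exists_seq_norm_eq_one_tendsto_norm_apply
    {𝕜 E F : Type*} [DenselyNormedField 𝕜] [NormedAlgebra ℝ 𝕜] [NormedAddCommGroup E]
    [NormedSpace 𝕜 E] [Nontrivial E] [SeminormedAddCommGroup F] [NormedSpace 𝕜 F]
    (f : E →L[𝕜] F) :
    ∃ x : ℕ → E, (∀ n, ‖x n‖ = 1) ∧ Tendsto (fun n => ‖f (x n)‖) atTop (𝓝 ‖f‖) := by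
  let _ : NormedSpace ℝ E := NormedSpace.restrictScalars ℝ 𝕜 E
  have hne : ((fun x => ‖f x‖) '' sphere (0 : E) 1).Nonempty :=
    (NormedSpace.sphere_nonempty.mpr zero_le_one).image _
  have hbdd : BddAbove ((fun x => ‖f x‖) '' sphere (0 : E) 1) := by
    refine ⟨‖f‖, ?_⟩
    rintro - ⟨x, hx, rfl⟩
    exact f.unit_le_opNorm x (mem_sphere_zero_iff_norm.mp hx).le
  obtain ⟨u, -, hu, hmem⟩ := exists_seq_tendsto_sSup hne hbdd
  choose x hx hfx using hmem
  refine ⟨x, fun n => mem_sphere_zero_iff_norm.mp (hx n), ?_⟩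
  simpa only [hfx, f.sSup_sphere_eq_norm] using hu

theorem Complex.tendsto_of_norm_le_of_tendsto_re {α : Type*} {l : Filter α} {z : α → ℂ} {r : ℝ}
    (hz : ∀ a, ‖z a‖ ≤ r) (hre : Tendsto (fun a => (z a).re) l (𝓝 r)) :
    Tendsto z l (𝓝 (r : ℂ)) := by
  have hdist : ∀ a, ‖z a - r‖ ≤ √(2 * r * (r - (z a).re)) := fun a => by
    have hexpand : ‖z a - r‖ ^ 2 = ‖z a‖ ^ 2 - 2 * r * (z a).re + r ^ 2 := by
      simp only [Complex.sq_norm, Complex.normSq_apply, Complex.sub_re, Complex.sub_im,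
        Complex.ofReal_re, Complex.ofReal_im]
      ring
    have hsq : ‖z a‖ ^ 2 ≤ r ^ 2 := pow_le_pow_left₀ (norm_nonneg _) (hz a) 2
    exact Real.le_sqrt_of_sq_le (by linarith)
  have hlim : Tendsto (fun a => √(2 * r * (r - (z a).re))) l (𝓝 0) := by
    simpa using ((tendsto_const_nhds (x := r)).sub hre).const_mul (2 * r) |>.sqrt
  exact tendsto_iff_norm_sub_tendsto_zero.mpr <|
    squeeze_zero (fun _ => norm_nonneg _) hdist hlim

theorem tendsto_of_tendsto_mul_of_le {α : Type*} {l : Filter α} {a b : α → ℝ} {A B : ℝ}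
    (ha : ∀ i, 0 ≤ a i) (haA : ∀ i, a i ≤ A) (hbB : ∀ i, b i ≤ B) (hB : 0 < B)
    (hab : Tendsto (fun i => a i * b i) l (𝓝 (A * B))) : Tendsto a l (𝓝 A) := by
  refine tendsto_of_tendsto_of_tendsto_of_le_of_le (g := fun i => a i * b i / B) ?_
    tendsto_const_nhds (fun i => ?_) haA
  · simpa [hB.ne'] using hab.div_const B
  · rw [div_le_iff₀ hB]; exact mul_le_mul_of_nonneg_left (hbB i) (ha i)

namespace ContinuousLinearMap

open RCLike InnerProductSpace

variable {𝕜 E F : Type*} [RCLike 𝕜] [NormedAddCommGroup E] [NormedSpace 𝕜 E]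
  [NormedAddCommGroup F] [InnerProductSpace 𝕜 F] (T S : E →L[𝕜] F) {x : ℕ → E}

theorem norm_apply_mul_norm_apply_le {y : E} (hy : ‖y‖ ≤ 1) : ‖T y‖ * ‖S y‖ ≤ ‖T‖ * ‖S‖ :=
  mul_le_mul (T.unit_le_opNorm y hy) (S.unit_le_opNorm y hy) (norm_nonneg _) (norm_nonneg _)

theorem tendsto_re_inner_of_tendsto_norm_add_apply (hx : ∀ n, ‖x n‖ ≤ 1)
    (h : Tendsto (fun n => ‖(T + S) (x n)‖) atTop (𝓝 (‖T‖ + ‖S‖))) :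
    Tendsto (fun n => re ⟪T (x n), S (x n)⟫_𝕜) atTop (𝓝 (‖T‖ * ‖S‖)) := by
  have hlower : ∀ n, (‖(T + S) (x n)‖ ^ 2 - ‖T‖ ^ 2 - ‖S‖ ^ 2) / 2 ≤ re ⟪T (x n), S (x n)⟫_𝕜 :=
    fun n => by
      have hT := pow_le_pow_left₀ (norm_nonneg _) (T.unit_le_opNorm _ (hx n)) 2
      have hS := pow_le_pow_left₀ (norm_nonneg _) (S.unit_le_opNorm _ (hx n)) 2
      rw [add_apply, norm_add_sq (𝕜 := 𝕜)]
      linarith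
  have hupper : ∀ n, re ⟪T (x n), S (x n)⟫_𝕜 ≤ ‖T‖ * ‖S‖ := fun n =>
    (re_inner_le_norm _ _).trans (norm_apply_mul_norm_apply_le T S (hx n))
  refine tendsto_of_tendsto_of_tendsto_of_le_of_le ?_ tendsto_const_nhds hlower hupper
  convert (((h.pow 2).sub_const (‖T‖ ^ 2)).sub_const (‖S‖ ^ 2)).div_const 2 using 2
  ring

theorem add_norm_le_norm_add_of_tendsto_re_inner (hx : ∀ n, ‖x n‖ ≤ 1)
    (h : Tendsto (fun n => re ⟪T (x n), S (x n)⟫_𝕜) atTop (𝓝 (‖T‖ * ‖S‖))) :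
    ‖T‖ + ‖S‖ ≤ ‖T + S‖ := by
  rcases (norm_nonneg T).eq_or_lt with hT | hT
  · simp [norm_eq_zero.mp hT.symm]
  rcases (norm_nonneg S).eq_or_lt with hS | hS
  · simp [norm_eq_zero.mp hS.symm]
  have hab : Tendsto (fun n => ‖T (x n)‖ * ‖S (x n)‖) atTop (𝓝 (‖T‖ * ‖S‖)) :=
    tendsto_of_tendsto_of_tendsto_of_le_of_le h tendsto_const_nhds
      (fun n => re_inner_le_norm _ _) (fun n => norm_apply_mul_norm_apply_le T S (hx n))
  have ha : Tendsto (fun n => ‖T (x n)‖) atTop (𝓝 ‖T‖) :=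
    tendsto_of_tendsto_mul_of_le (fun n => norm_nonneg _) (fun n => T.unit_le_opNorm _ (hx n))
      (fun n => S.unit_le_opNorm _ (hx n)) hS hab
  have hb : Tendsto (fun n => ‖S (x n)‖) atTop (𝓝 ‖S‖) :=
    tendsto_of_tendsto_mul_of_le (fun n => norm_nonneg _) (fun n => S.unit_le_opNorm _ (hx n))
      (fun n => T.unit_le_opNorm _ (hx n)) hT (by simpa only [mul_comm] using hab)
  have hsq : Tendsto (fun n => ‖(T + S) (x n)‖ ^ 2) atTop (𝓝 ((‖T‖ + ‖S‖) ^ 2)) := by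
    simp only [add_apply, norm_add_sq (𝕜 := 𝕜)]
    rw [show (‖T‖ + ‖S‖) ^ 2 = ‖T‖ ^ 2 + 2 * (‖T‖ * ‖S‖) + ‖S‖ ^ 2 by ring]
    exact ((ha.pow 2).add (h.const_mul 2)).add (hb.pow 2)
  have hle : (‖T‖ + ‖S‖) ^ 2 ≤ ‖T + S‖ ^ 2 := le_of_tendsto' hsq fun n =>
    pow_le_pow_left₀ (norm_nonneg _) ((T + S).unit_le_opNorm _ (hx n)) 2
  exact (pow_le_pow_iff_left₀ (by positivity) (norm_nonneg _) two_ne_zero).mp hle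

end ContinuousLinearMap

theorem norm_add_eq_iff_general
    {H : Type*} [NormedAddCommGroup H] [InnerProductSpace ℂ H]
    [Nontrivial H] (T S : H →L[ℂ] H) :
    ‖T + S‖ = ‖T‖ + ‖S‖ ↔
      ∃ x : ℕ → H, (∀ n, ‖x n‖ = 1) ∧
        Tendsto (fun n => @inner ℂ H _ (T (x n)) (S (x n)))
          atTop (𝓝 ((‖T‖ * ‖S‖ : ℝ) : ℂ)) := by
  constructor
  · intro h
    obtain ⟨x, hx, hlim⟩ := (T + S).exists_seq_norm_eq_one_tendsto_norm_apply
    refine ⟨x, hx, Complex.tendsto_of_norm_le_of_tendsto_re (fun n => ?_) ?_⟩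
    · exact (norm_inner_le_norm _ _).trans (T.norm_apply_mul_norm_apply_le S (hx n).le)
    · exact T.tendsto_re_inner_of_tendsto_norm_add_apply S (fun n => (hx n).le) (h ▸ hlim)
  · rintro ⟨x, hx, hlim⟩
    exact le_antisymm (norm_add_le T S) <| T.add_norm_le_norm_add_of_tendsto_re_inner S
      (fun n => (hx n).le) ((Complex.continuous_re.tendsto _).comp hlim)

theorem norm_add_eq_iff
    {H : Type*} [NormedAddCommGroup H] [InnerProductSpace ℂ H] [CompleteSpace H]
    [Nontrivial H] (T S : H →L[ℂ] H) :
    ‖T + S‖ = ‖T‖ + ‖S‖ ↔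
      ∃ x : ℕ → H, (∀ n, ‖x n‖ = 1) ∧
        Tendsto (fun n => @inner ℂ H _ (T (x n)) (S (x n)))
          atTop (𝓝 ((‖T‖ * ‖S‖ : ℝ) : ℂ)) :=
  norm_add_eq_iff_general T S
end

section
/- For bounded operators T, S on a complex Hilbert space H, the equality w(T+S) = w(T) + w(S) holds if and only if there exists a sequence {x_n} of unit vectors in H with lim_{n→∞} ⟨x_n, Tx_n⟩·⟨Sx_n, x_n⟩ = w(T)·w(S), where w(T) = sup{|⟨Tx,x⟩| : ‖x‖ = 1} is the numerical radius. -/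
open Filter Topology

/-- The numerical radius `w(T) = sup {|⟨Tx, x⟩| : ‖x‖ = 1}` (paper convention
`⟨Tx, x⟩` corresponds to Mathlib's `⟪ x, T x ⟫`). -/
noncomputable def numRad {H : Type*} [NormedAddCommGroup H] [InnerProductSpace ℂ H]
    (T : H →L[ℂ] H) : ℝ :=
  sSup {r : ℝ | ∃ x : H, ‖x‖ = 1 ∧ r = ‖(@inner ℂ H _ x (T x))‖}

/-!
For a unit vector `x` put `a = ⟪x, T x⟫` and `b = ⟪x, S x⟫`; then `|a| ≤ w(T)`, `|b| ≤ w(S)`, and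
`⟨Tx, x⟩⟨Sx, x⟩` is `conj a * b`. Since `|a + b|² = |a|² + |b|² + 2 Re (conj a * b)`, along unit
vectors `|a + b| → w(T) + w(S)` forces `|a| → w(T)`, `|b| → w(S)` and hence
`conj a * b → w(T)w(S)`; a sequence with `|a + b| → w(T + S)` always exists.
Conversely `conj a * b → w(T)w(S)` gives `|a||b| → w(T)w(S)`, hence `|a| → w(T)` and `|b| → w(S)`
as long as both radii are positive, and then `|a + b| → w(T) + w(S) ≤ w(T + S)`. If `w(T) = 0`,
then `⟪x, T x⟫` vanishes on unit vectors and `w(T + S) = w(S)` directly.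
-/

open ComplexConjugate

section Sequences

variable {ι : Type*} {l : Filter ι}

lemma tendsto_norm_left_of_tendsto_norm_add {E : Type*} [SeminormedAddCommGroup E]
    {a b : ι → E} {α β : ℝ} (ha : ∀ i, ‖a i‖ ≤ α) (hb : ∀ i, ‖b i‖ ≤ β)
    (h : Tendsto (fun i => ‖a i + b i‖) l (𝓝 (α + β))) :
    Tendsto (fun i => ‖a i‖) l (𝓝 α) :=
  tendsto_of_tendsto_of_tendsto_of_le_of_le (by simpa using h.sub_const β) tendsto_const_nhds
    (fun i => by linarith [norm_add_le (a i) (b i), hb i]) ha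

lemma tendsto_left_of_tendsto_mul_of_le {f g : ι → ℝ} {α β : ℝ} (hβ : 0 < β) (hf₀ : ∀ i, 0 ≤ f i)
    (hf : ∀ i, f i ≤ α) (hg : ∀ i, g i ≤ β)
    (h : Tendsto (fun i => f i * g i) l (𝓝 (α * β))) : Tendsto f l (𝓝 α) := by
  refine tendsto_of_tendsto_of_tendsto_of_le_of_le (g := fun i => f i * g i / β)
    (by simpa [hβ.ne'] using h.div_const β) tendsto_const_nhds (fun i => ?_) hf
  rw [div_le_iff₀ hβ]
  exact mul_le_mul_of_nonneg_left (hg i) (hf₀ i)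

lemma Complex.sq_norm_add (z w : ℂ) :
    ‖z + w‖ ^ 2 = ‖z‖ ^ 2 + 2 * (conj z * w).re + ‖w‖ ^ 2 := by
  rw [norm_add_sq (𝕜 := ℂ), RCLike.inner_apply, mul_comm w]
  rfl

lemma Complex.tendsto_ofReal_of_tendsto_norm_of_tendsto_re {z : ι → ℂ} {r : ℝ}
    (hnorm : Tendsto (fun i => ‖z i‖) l (𝓝 r)) (hre : Tendsto (fun i => (z i).re) l (𝓝 r)) :
    Tendsto z l (𝓝 (r : ℂ)) := by
  have hsq : Tendsto (fun i => ‖z i - r‖ ^ 2) l (𝓝 0) := by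
    have h := ((hnorm.pow 2).sub (hre.const_mul (2 * r))).add_const (r ^ 2)
    rw [show r ^ 2 - 2 * r * r + r ^ 2 = 0 by ring] at h
    refine h.congr fun i => ?_
    simp only [Complex.sq_norm, Complex.normSq_apply, Complex.sub_re, Complex.sub_im,
      Complex.ofReal_re, Complex.ofReal_im]
    ring
  rw [tendsto_iff_norm_sub_tendsto_zero]
  simpa using hsq.sqrt

variable {a b : ι → ℂ} {α β : ℝ}

lemma tendsto_conj_mul_of_tendsto_norm_add (ha : ∀ i, ‖a i‖ ≤ α) (hb : ∀ i, ‖b i‖ ≤ β)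
    (h : Tendsto (fun i => ‖a i + b i‖) l (𝓝 (α + β))) :
    Tendsto (fun i => conj (a i) * b i) l (𝓝 ((α * β : ℝ) : ℂ)) := by
  have hα := tendsto_norm_left_of_tendsto_norm_add ha hb h
  have hβ := tendsto_norm_left_of_tendsto_norm_add hb ha (by simpa only [add_comm] using h)
  refine Complex.tendsto_ofReal_of_tendsto_norm_of_tendsto_re ?_ ?_
  · simpa using hα.mul hβ
  · have hre := (((h.pow 2).sub (hα.pow 2)).sub (hβ.pow 2)).div_const 2
    rw [show ((α + β) ^ 2 - α ^ 2 - β ^ 2) / 2 = α * β by ring] at hre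
    refine hre.congr fun i => ?_
    rw [Complex.sq_norm_add]
    ring

lemma tendsto_norm_add_of_tendsto_conj_mul (hα : 0 < α) (hβ : 0 < β)
    (ha : ∀ i, ‖a i‖ ≤ α) (hb : ∀ i, ‖b i‖ ≤ β)
    (h : Tendsto (fun i => conj (a i) * b i) l (𝓝 ((α * β : ℝ) : ℂ))) :
    Tendsto (fun i => ‖a i + b i‖) l (𝓝 (α + β)) := by
  have hnorm : Tendsto (fun i => ‖a i‖ * ‖b i‖) l (𝓝 (α * β)) := by
    simpa [abs_of_pos hα, abs_of_pos hβ] using h.norm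
  have ha' := tendsto_left_of_tendsto_mul_of_le hβ (fun i => norm_nonneg _) ha hb hnorm
  have hb' := tendsto_left_of_tendsto_mul_of_le hα (fun i => norm_nonneg _) hb ha
    (by simpa only [mul_comm] using hnorm)
  have hsq := ((ha'.pow 2).add ((Complex.continuous_re.tendsto _).comp h |>.const_mul 2)).add
    (hb'.pow 2)
  rw [Complex.ofReal_re, show α ^ 2 + 2 * (α * β) + β ^ 2 = (α + β) ^ 2 by ring] at hsq
  simpa [Real.sqrt_sq (add_pos hα hβ).le] using
    (hsq.congr fun i => (Complex.sq_norm_add _ _).symm).sqrt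

end Sequences

open scoped InnerProductSpace

section NumRad

variable {H : Type*} [NormedAddCommGroup H] [InnerProductSpace ℂ H]

lemma bddAbove_numRad_set (T : H →L[ℂ] H) :
    BddAbove {r : ℝ | ∃ x : H, ‖x‖ = 1 ∧ r = ‖⟪x, T x⟫_ℂ‖} := by
  refine ⟨‖T‖, ?_⟩
  rintro r ⟨x, hx, rfl⟩
  calc ‖⟪x, T x⟫_ℂ‖ ≤ ‖x‖ * ‖T x‖ := norm_inner_le_norm _ _
    _ ≤ ‖T‖ := by simpa [hx] using T.le_opNorm x

lemma norm_inner_le_numRad (T : H →L[ℂ] H) {x : H} (hx : ‖x‖ = 1) :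
    ‖⟪x, T x⟫_ℂ‖ ≤ numRad T :=
  le_csSup (bddAbove_numRad_set T) ⟨x, hx, rfl⟩

lemma numRad_nonneg (T : H →L[ℂ] H) : 0 ≤ numRad T :=
  Real.sSup_nonneg fun _ ⟨_, _, hr⟩ => hr ▸ norm_nonneg _

lemma numRad_add_le (T S : H →L[ℂ] H) : numRad (T + S) ≤ numRad T + numRad S := by
  refine Real.sSup_le (fun r ⟨x, hx, hr⟩ => ?_) (add_nonneg (numRad_nonneg T) (numRad_nonneg S))
  rw [hr, add_apply, inner_add_right]
  exact (norm_add_le _ _).trans (add_le_add (norm_inner_le_numRad T hx) (norm_inner_le_numRad S hx))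

lemma exists_seq_tendsto_numRad [Nontrivial H] (T : H →L[ℂ] H) :
    ∃ x : ℕ → H, (∀ n, ‖x n‖ = 1) ∧
      Tendsto (fun n => ‖⟪x n, T (x n)⟫_ℂ‖) atTop (𝓝 (numRad T)) := by
  obtain ⟨x₀, hx₀⟩ := exists_norm_eq H zero_le_one
  obtain ⟨u, -, hu, hmem⟩ := exists_seq_tendsto_sSup
    (⟨_, x₀, hx₀, rfl⟩ : {r : ℝ | ∃ x : H, ‖x‖ = 1 ∧ r = ‖⟪x, T x⟫_ℂ‖}.Nonempty)
    (bddAbove_numRad_set T)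
  choose x hx hux using hmem
  exact ⟨x, hx, hu.congr fun n => hux n⟩

lemma inner_apply_eq_zero_of_numRad_eq_zero {T : H →L[ℂ] H} (hT : numRad T = 0) {x : H}
    (hx : ‖x‖ = 1) : ⟪x, T x⟫_ℂ = 0 :=
  norm_le_zero_iff.mp (hT ▸ norm_inner_le_numRad T hx)

lemma numRad_add_of_numRad_eq_zero {T : H →L[ℂ] H} (hT : numRad T = 0) (S : H →L[ℂ] H) :
    numRad (T + S) = numRad S := by
  unfold numRad
  congr 1
  refine Set.ext fun r => exists_congr fun x => and_congr_right fun hx => ?_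
  rw [add_apply, inner_add_right, inner_apply_eq_zero_of_numRad_eq_zero hT hx, zero_add]

end NumRad

theorem numRad_add_eq_iff_general
    {H : Type*} [NormedAddCommGroup H] [InnerProductSpace ℂ H]
    [Nontrivial H] (T S : H →L[ℂ] H) :
    numRad (T + S) = numRad T + numRad S ↔
      ∃ x : ℕ → H, (∀ n, ‖x n‖ = 1) ∧
        Tendsto (fun n => @inner ℂ H _ (T (x n)) (x n) * @inner ℂ H _ (x n) (S (x n)))
          atTop (𝓝 ((numRad T * numRad S : ℝ) : ℂ)) := by
  have hconj (y : H) : ⟪T y, y⟫_ℂ * ⟪y, S y⟫_ℂ = conj ⟪y, T y⟫_ℂ * ⟪y, S y⟫_ℂ := by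
    rw [inner_conj_symm]
  have hsum (y : H) : ⟪y, (T + S) y⟫_ℂ = ⟪y, T y⟫_ℂ + ⟪y, S y⟫_ℂ := by
    rw [add_apply, inner_add_right]
  simp only [hconj]
  constructor
  · intro h
    obtain ⟨x, hx, hlim⟩ := exists_seq_tendsto_numRad (T + S)
    refine ⟨x, hx, tendsto_conj_mul_of_tendsto_norm_add (fun n => norm_inner_le_numRad T (hx n))
      (fun n => norm_inner_le_numRad S (hx n)) ?_⟩
    simpa only [h, hsum] using hlim
  · rintro ⟨x, hx, hlim⟩
    rcases (numRad_nonneg T).eq_or_lt with hT | hT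
    · rw [← hT, numRad_add_of_numRad_eq_zero hT.symm, zero_add]
    rcases (numRad_nonneg S).eq_or_lt with hS | hS
    · rw [← hS, add_comm T, numRad_add_of_numRad_eq_zero hS.symm, add_zero]
    refine le_antisymm (numRad_add_le T S) (le_of_tendsto' (tendsto_norm_add_of_tendsto_conj_mul
      hT hS (fun n => norm_inner_le_numRad T (hx n)) (fun n => norm_inner_le_numRad S (hx n))
      hlim) fun n => ?_)
    simpa only [hsum] using norm_inner_le_numRad (T + S) (hx n)

theorem numRad_add_eq_iff
    {H : Type*} [NormedAddCommGroup H] [InnerProductSpace ℂ H] [CompleteSpace H]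
    [Nontrivial H] (T S : H →L[ℂ] H) :
    numRad (T + S) = numRad T + numRad S ↔
      ∃ x : ℕ → H, (∀ n, ‖x n‖ = 1) ∧
        Tendsto (fun n => @inner ℂ H _ (T (x n)) (x n) * @inner ℂ H _ (x n) (S (x n)))
          atTop (𝓝 ((numRad T * numRad S : ℝ) : ℂ)) :=
  numRad_add_eq_iff_general T S
end

section
/- For bounded operators T, S on a complex Hilbert space H, T is Birkhoff–James orthogonal to S (i.e. ‖T + ξS‖ ≥ ‖T‖ for all ξ ∈ ℂ) if and only if ‖T + ξS‖² ≥ ‖T‖² + |ξ|²·[S]² for all ξ ∈ ℂ, where [S] = inf{‖Sx‖ : ‖x‖ = 1} is the minimum modulus of S. -/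
open Filter Topology

/-- The minimum modulus `[S] = inf {‖Sx‖ : ‖x‖ = 1}`. -/
noncomputable def minMod {H : Type*} [NormedAddCommGroup H] [InnerProductSpace ℂ H]
    (S : H →L[ℂ] H) : ℝ :=
  sInf {r : ℝ | ∃ x : H, ‖x‖ = 1 ∧ r = ‖S x‖}

/-! If `T` is Birkhoff–James orthogonal to `S`, then for small `t > 0` pick a unit vector `x`
with `‖(T + tξS) x‖² > ‖T + tξS‖² - t² ≥ ‖T‖² - t²`. Expanding
`‖(T + tξS) x‖² = ‖T x‖² + 2t Re⟪T x, ξ S x⟫ + t² |ξ|² ‖S x‖²` and using `‖T x‖ ≤ ‖T‖` forces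
`Re⟪T x, ξ S x⟫ ≥ -O(t)` and `‖T x‖² ≥ ‖T‖² - O(t)`, hence
`‖T + ξS‖² ≥ ‖(T + ξS) x‖² ≥ ‖T‖² + |ξ|² [S]² - O(t)`; let `t → 0`.
The converse is immediate. -/

open Set RCLike

def BirkhoffJamesOrthogonal (𝕜 : Type*) {E : Type*} [NormedField 𝕜] [SeminormedAddCommGroup E]
    [NormedSpace 𝕜 E] (x y : E) : Prop :=
  ∀ ξ : 𝕜, ‖x‖ ≤ ‖x + ξ • y‖

namespace ContinuousLinearMap

variable {𝕜 E F : Type*} [RCLike 𝕜]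

theorem exists_norm_eq_one_lt_apply_of_lt_opNorm [NormedAddCommGroup E] [NormedAddCommGroup F]
    [NormedSpace 𝕜 E] [NormedSpace 𝕜 F] [Nontrivial E] (A : E →L[𝕜] F) {r : ℝ} (hr : r < ‖A‖) :
    ∃ x : E, ‖x‖ = 1 ∧ r < ‖A x‖ := by
  have : Nonempty (Metric.sphere (0 : E) 1) := NormedSpace.sphere_nonempty_rclike 𝕜 zero_le_one
  rw [← A.sSup_sphere_eq_norm] at hr
  obtain ⟨_, ⟨x, hx, rfl⟩, hrx⟩ :=
    exists_lt_of_lt_csSup ((Set.nonempty_coe_sort.1 this).image _) hr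
  exact ⟨x, mem_sphere_zero_iff_norm.1 hx, hrx⟩

theorem exists_norm_eq_one_sq_opNorm_sub_lt_sq_norm_apply [NormedAddCommGroup E]
    [NormedAddCommGroup F] [NormedSpace 𝕜 E] [NormedSpace 𝕜 F] [Nontrivial E] (A : E →L[𝕜] F)
    {δ : ℝ} (hδ : 0 < δ) : ∃ x : E, ‖x‖ = 1 ∧ ‖A‖ ^ 2 - δ < ‖A x‖ ^ 2 := by
  rcases lt_or_ge (‖A‖ ^ 2 - δ) 0 with hneg | hnonneg
  · obtain ⟨x, hx, -⟩ :=
      A.exists_norm_eq_one_lt_apply_of_lt_opNorm (neg_one_lt_zero.trans_le (norm_nonneg A))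
    exact ⟨x, hx, hneg.trans_le (sq_nonneg _)⟩
  have hA : 0 < ‖A‖ := by nlinarith [norm_nonneg A]
  obtain ⟨x, hx, hAx⟩ := A.exists_norm_eq_one_lt_apply_of_lt_opNorm
    ((Real.sqrt_lt' hA).2 (sub_lt_self _ hδ))
  exact ⟨x, hx, (Real.sqrt_lt' ((Real.sqrt_nonneg _).trans_lt hAx)).1 hAx⟩

theorem norm_add_smul_apply_sq [NormedAddCommGroup E] [NormedAddCommGroup F] [NormedSpace 𝕜 E]
    [InnerProductSpace 𝕜 F] (T S : E →L[𝕜] F) (ξ : 𝕜) (x : E) :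
    ‖(T + ξ • S) x‖ ^ 2 = ‖T x‖ ^ 2 + 2 * re (inner 𝕜 (T x) (ξ • S x)) + ‖ξ‖ ^ 2 * ‖S x‖ ^ 2 := by
  rw [add_apply, smul_apply, @norm_add_sq 𝕜, norm_smul, mul_pow]

end ContinuousLinearMap

section

variable {H : Type*} [NormedAddCommGroup H] [InnerProductSpace ℂ H]

theorem minMod_nonneg (S : H →L[ℂ] H) : 0 ≤ minMod S :=
  Real.sInf_nonneg (by rintro r ⟨x, -, rfl⟩; positivity)

theorem minMod_le_norm_apply (S : H →L[ℂ] H) {x : H} (hx : ‖x‖ = 1) : minMod S ≤ ‖S x‖ :=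
  csInf_le ⟨0, by rintro r ⟨y, -, rfl⟩; positivity⟩ ⟨x, hx, rfl⟩

theorem minMod_of_subsingleton [Subsingleton H] (S : H →L[ℂ] H) : minMod S = 0 := by
  simp [minMod, Subsingleton.elim _ (0 : H)]

theorem sq_opNorm_add_le_add_mul_of_le [Nontrivial H] {T S : H →L[ℂ] H} {ξ : ℂ} {t : ℝ}
    (ht : t ∈ Ioc 0 1) (h : ‖T‖ ≤ ‖T + ((t : ℂ) * ξ) • S‖) :
    ‖T‖ ^ 2 + ‖ξ‖ ^ 2 * minMod S ^ 2 ≤ ‖T + ξ • S‖ ^ 2 + t * (1 + ‖ξ‖ ^ 2 * ‖S‖ ^ 2) := by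
  obtain ⟨ht0, ht1⟩ := ht
  obtain ⟨x, hx, hxT⟩ :=
    (T + ((t : ℂ) * ξ) • S).exists_norm_eq_one_sq_opNorm_sub_lt_sq_norm_apply (pow_pos ht0 2)
  have hre : re (inner ℂ (T x) (((t : ℂ) * ξ) • S x)) = t * re (inner ℂ (T x) (ξ • S x)) := by
    rw [mul_smul, inner_smul_right]; exact re_ofReal_mul t _
  have hnorm : ‖(t : ℂ) * ξ‖ = t * ‖ξ‖ := by
    rw [norm_mul, Complex.norm_real, Real.norm_of_nonneg ht0.le]
  rw [ContinuousLinearMap.norm_add_smul_apply_sq, hre, hnorm] at hxT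
  have hTx : ‖T x‖ ^ 2 ≤ ‖T‖ ^ 2 := by
    gcongr; simpa [hx] using T.le_opNorm x
  have hle :
      ‖T x‖ ^ 2 + 2 * re (inner ℂ (T x) (ξ • S x)) + ‖ξ‖ ^ 2 * ‖S x‖ ^ 2 ≤ ‖T + ξ • S‖ ^ 2 := by
    rw [← ContinuousLinearMap.norm_add_smul_apply_sq]
    gcongr; simpa [hx] using (T + ξ • S).le_opNorm x
  have hcS : ‖ξ‖ ^ 2 * ‖S x‖ ^ 2 ≤ ‖ξ‖ ^ 2 * ‖S‖ ^ 2 := by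
    gcongr; simpa [hx] using S.le_opNorm x
  have hcm : ‖ξ‖ ^ 2 * minMod S ^ 2 ≤ ‖ξ‖ ^ 2 * ‖S x‖ ^ 2 := by
    have := minMod_nonneg S
    gcongr; exact minMod_le_norm_apply S hx
  set b := re (inner ℂ (T x) (ξ • S x))
  set c := ‖ξ‖ ^ 2 * ‖S x‖ ^ 2
  have hquad : ‖T‖ ^ 2 - t ^ 2 < ‖T x‖ ^ 2 + 2 * (t * b) + t ^ 2 * c := by
    have : ‖T‖ ^ 2 ≤ ‖T + ((t : ℂ) * ξ) • S‖ ^ 2 := by gcongr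
    linarith
  have hb : -(t * (1 + c)) ≤ 2 * b :=
    le_of_mul_le_mul_left (by linarith) ht0
  have key : ‖T‖ ^ 2 - t * (1 + c) ≤ ‖T x‖ ^ 2 + 2 * b := by
    nlinarith [mul_le_mul_of_nonneg_left hb (sub_nonneg.2 ht1)]
  nlinarith [mul_le_mul_of_nonneg_left hcS ht0.le]

theorem BirkhoffJamesOrthogonal.sq_opNorm_add_le {T S : H →L[ℂ] H}
    (h : BirkhoffJamesOrthogonal ℂ T S) (ξ : ℂ) :
    ‖T‖ ^ 2 + ‖ξ‖ ^ 2 * minMod S ^ 2 ≤ ‖T + ξ • S‖ ^ 2 := by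
  rcases subsingleton_or_nontrivial H with _ | _
  · simp [minMod_of_subsingleton, Subsingleton.elim T 0]
  have hlim : Tendsto (fun t : ℝ => ‖T + ξ • S‖ ^ 2 + t * (1 + ‖ξ‖ ^ 2 * ‖S‖ ^ 2)) (𝓝[>] 0)
      (𝓝 (‖T + ξ • S‖ ^ 2)) := by
    have hcont : Continuous fun t : ℝ => ‖T + ξ • S‖ ^ 2 + t * (1 + ‖ξ‖ ^ 2 * ‖S‖ ^ 2) := by
      fun_prop
    simpa using tendsto_nhdsWithin_of_tendsto_nhds (hcont.tendsto 0)
  exact ge_of_tendsto hlim <| mem_of_superset (Ioc_mem_nhdsGT one_pos) fun t ht =>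
    sq_opNorm_add_le_add_mul_of_le ht (h _)

end

theorem BJ_orthogonal_iff_sq_ineq_opNorm_general
    {H : Type*} [NormedAddCommGroup H] [InnerProductSpace ℂ H] (T S : H →L[ℂ] H) :
    (∀ ξ : ℂ, ‖T‖ ≤ ‖T + ξ • S‖) ↔
      (∀ ξ : ℂ, ‖T‖ ^ 2 + ‖ξ‖ ^ 2 * minMod S ^ 2 ≤ ‖T + ξ • S‖ ^ 2) := by
  refine ⟨BirkhoffJamesOrthogonal.sq_opNorm_add_le, fun h ξ => ?_⟩
  have := minMod_nonneg S
  exact (pow_le_pow_iff_left₀ (norm_nonneg _) (norm_nonneg _) two_ne_zero).1 <|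
    (le_add_of_nonneg_right (by positivity)).trans (h ξ)

theorem BJ_orthogonal_iff_sq_ineq_opNorm
    {H : Type*} [NormedAddCommGroup H] [InnerProductSpace ℂ H] [CompleteSpace H]
    [Nontrivial H] (T S : H →L[ℂ] H) :
    (∀ ξ : ℂ, ‖T‖ ≤ ‖T + ξ • S‖) ↔
      (∀ ξ : ℂ, ‖T‖ ^ 2 + ‖ξ‖ ^ 2 * minMod S ^ 2 ≤ ‖T + ξ • S‖ ^ 2) :=
  BJ_orthogonal_iff_sq_ineq_opNorm_general T S
end

section
/- For bounded operators T, S on a complex Hilbert space H, T is Birkhoff–James orthogonal to S if and only if for each θ ∈ [0,2π) there exists a sequence {x_n} of unit vectors in H with lim_{n→∞} ‖Tx_n‖ = ‖T‖ and liminf_{n→∞} Re( e^{iθ}⟨Sx_n, Tx_n⟩ ) ≥ 0. -/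
/-! Everything rests on the expansion
`‖(T + ξ • S) x‖² = ‖T x‖² + 2 Re (ξ ⟪T x, S x⟫) + |ξ|² ‖S x‖²`.
If `T ⊥_B S`, apply orthogonality at `ξ = t e^{iθ}` with `t = 1/(n+1)` and pick a unit vector
`x_n` almost norming `T + ξ • S`: the expansion forces `‖T x_n‖ ≥ ‖T‖ - O(t)` and
`Re (e^{iθ} ⟪T x_n, S x_n⟫) ≥ -O(t)`. Conversely, for `ξ = r e^{iθ}` the expansion along the
sequence for `θ` gives `‖T + ξ • S‖² ≥ ‖T x_n‖² + 2 r Re (e^{iθ} ⟪T x_n, S x_n⟫)`, whose lower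
limit is at least `‖T‖²`. -/

open Filter Topology
open scoped InnerProductSpace

theorem ContinuousLinearMap.exists_norm_eq_one_lt_norm_apply {𝕜 E F : Type*} [RCLike 𝕜]
    [NormedAddCommGroup E] [NormedSpace 𝕜 E] [Nontrivial E] [SeminormedAddCommGroup F]
    [NormedSpace 𝕜 F] (f : E →L[𝕜] F) {r : ℝ} (hr : r < ‖f‖) :
    ∃ x, ‖x‖ = 1 ∧ r < ‖f x‖ := by
  rw [← f.sSup_sphere_eq_norm] at hr
  obtain ⟨_, ⟨x, hx, rfl⟩, hlt⟩ :=
    exists_lt_of_lt_csSup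
      ((Set.nonempty_coe_sort.1 (NormedSpace.sphere_nonempty_rclike 𝕜 zero_le_one)).image _) hr
  exact ⟨x, mem_sphere_zero_iff_norm.1 hx, hlt⟩

theorem norm_add_smul_sq {𝕜 E : Type*} [RCLike 𝕜] [NormedAddCommGroup E] [InnerProductSpace 𝕜 E]
    (u v : E) (c : 𝕜) :
    ‖u + c • v‖ ^ 2 = ‖u‖ ^ 2 + 2 * RCLike.re (c * inner 𝕜 u v) + ‖c‖ ^ 2 * ‖v‖ ^ 2 := by
  rw [norm_add_sq (𝕜 := 𝕜), inner_smul_right, norm_smul, mul_pow]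

theorem Complex.exists_mem_Ico_eq_norm_mul_exp (ξ : ℂ) :
    ∃ θ ∈ Set.Ico 0 (2 * Real.pi), ξ = ‖ξ‖ * Complex.exp (θ * Complex.I) := by
  have hper : Function.Periodic (fun θ : ℝ => Complex.exp (θ * Complex.I)) (2 * Real.pi) :=
    fun θ => by simpa using Complex.exp_mul_I_periodic (θ : ℂ)
  obtain ⟨θ, hθ, hexp⟩ := hper.exists_mem_Ico₀ Real.two_pi_pos (Complex.arg ξ)
  exact ⟨θ, hθ, by rw [← hexp, Complex.norm_mul_exp_arg_mul_I]⟩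

section

variable {H : Type*} [NormedAddCommGroup H] [InnerProductSpace ℂ H] (T S : H →L[ℂ] H)

theorem abs_re_mul_inner_apply_le {x : H} (hx : ‖x‖ = 1) {e : ℂ} (he : ‖e‖ = 1) :
    |(e * ⟪T x, S x⟫_ℂ).re| ≤ ‖T‖ * ‖S‖ :=
  calc |(e * ⟪T x, S x⟫_ℂ).re| ≤ ‖e * ⟪T x, S x⟫_ℂ‖ := Complex.abs_re_le_norm _
    _ ≤ ‖T x‖ * ‖S x‖ := by rw [norm_mul, he, one_mul]; exact norm_inner_le_norm _ _
    _ ≤ ‖T‖ * ‖S‖ := by gcongr <;> simpa [hx] using ContinuousLinearMap.le_opNorm _ x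

theorem exists_unit_almost_norming_of_le_norm_add_smul [Nontrivial H] {e : ℂ} (he : ‖e‖ = 1)
    {t : ℝ} (ht : 0 < t) (hT : ‖T‖ ≤ ‖T + ((t : ℂ) * e) • S‖) :
    ∃ x, ‖x‖ = 1 ∧ ‖T‖ - t * (t + ‖S‖) < ‖T x‖ ∧
      -t * (‖T‖ + ‖S‖ ^ 2 / 2) ≤ (e * ⟪T x, S x⟫_ℂ).re := by
  set A := T + ((t : ℂ) * e) • S
  obtain ⟨x, hx, hAx⟩ := A.exists_norm_eq_one_lt_norm_apply (sub_lt_self ‖A‖ (pow_pos ht 2))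
  have hTx : ‖T x‖ ≤ ‖T‖ := by simpa [hx] using T.le_opNorm x
  have hSx : ‖S x‖ ≤ ‖S‖ := by simpa [hx] using S.le_opNorm x
  have hte : ‖(t : ℂ) * e‖ = t := by simp [he, ht.le]
  refine ⟨x, hx, ?_, ?_⟩
  · have : ‖A x‖ ≤ ‖T x‖ + t * ‖S x‖ := by
      simpa only [A, add_apply, smul_apply, norm_smul, hte]
        using norm_add_le (T x) (((t : ℂ) * e) • S x)
    nlinarith
  · have hid : ‖A x‖ ^ 2 = ‖T x‖ ^ 2 + 2 * (t * (e * ⟪T x, S x⟫_ℂ).re) + t ^ 2 * ‖S x‖ ^ 2 := by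
      simpa only [A, add_apply, smul_apply, hte, mul_assoc, RCLike.re_to_complex,
        Complex.re_ofReal_mul] using norm_add_smul_sq (T x) (S x) ((t : ℂ) * e)
    have hAx_sq : ‖T‖ ^ 2 - 2 * t ^ 2 * ‖T‖ ≤ ‖A x‖ ^ 2 := by
      rcases le_total (t ^ 2) ‖T‖ with h | h
      · nlinarith [mul_self_le_mul_self (sub_nonneg.2 h) (show ‖T‖ - t ^ 2 ≤ ‖A x‖ by linarith)]
      · have : 0 ≤ 2 * t ^ 2 - ‖T‖ := by linarith [pow_pos ht 2]
        nlinarith [mul_nonneg (norm_nonneg T) this]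
    nlinarith [pow_le_pow_left₀ (norm_nonneg _) hTx 2, pow_le_pow_left₀ (norm_nonneg _) hSx 2]

theorem exists_seq_of_forall_le_norm_add_smul [Nontrivial H]
    (hT : ∀ ξ : ℂ, ‖T‖ ≤ ‖T + ξ • S‖) {e : ℂ} (he : ‖e‖ = 1) :
    ∃ x : ℕ → H, (∀ n, ‖x n‖ = 1) ∧ Tendsto (fun n => ‖T (x n)‖) atTop (𝓝 ‖T‖) ∧
      0 ≤ liminf (fun n => (e * ⟪T (x n), S (x n)⟫_ℂ).re) atTop := by
  set t : ℕ → ℝ := fun n => 1 / ((n : ℝ) + 1)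
  have ht : Tendsto t atTop (𝓝 0) := tendsto_one_div_add_atTop_nhds_zero_nat
  choose x hx hTx hre using fun n =>
    exists_unit_almost_norming_of_le_norm_add_smul T S he Nat.one_div_pos_of_nat (hT _)
  refine ⟨x, hx, ?_, ?_⟩
  · refine tendsto_of_tendsto_of_tendsto_of_le_of_le ?_ tendsto_const_nhds (fun n => (hTx n).le)
      fun n => by simpa [hx n] using T.le_opNorm (x n)
    have := (tendsto_const_nhds (x := ‖T‖)).sub (ht.mul (ht.add_const ‖S‖))
    rwa [zero_mul, sub_zero] at this
  · have hlow : Tendsto (fun n => -t n * (‖T‖ + ‖S‖ ^ 2 / 2)) atTop (𝓝 0) := by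
      simpa using ht.neg.mul_const (‖T‖ + ‖S‖ ^ 2 / 2)
    rw [← hlow.liminf_eq]
    exact liminf_le_liminf (Eventually.of_forall hre) hlow.isBoundedUnder_ge
      (isBoundedUnder_of ⟨‖T‖ * ‖S‖, fun n =>
        (abs_le.1 (abs_re_mul_inner_apply_le T S (hx n) he)).2⟩).isCoboundedUnder_ge

theorem le_norm_add_smul_of_seq {x : ℕ → H} (hx : ∀ n, ‖x n‖ = 1)
    (hTx : Tendsto (fun n => ‖T (x n)‖) atTop (𝓝 ‖T‖)) {e : ℂ} (he : ‖e‖ = 1)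
    (hre : 0 ≤ liminf (fun n => (e * ⟪T (x n), S (x n)⟫_ℂ).re) atTop) {r : ℝ} (hr : 0 ≤ r) :
    ‖T‖ ≤ ‖T + ((r : ℂ) * e) • S‖ := by
  set A := T + ((r : ℂ) * e) • S
  set a := fun n => (e * ⟪T (x n), S (x n)⟫_ℂ).re
  have hA : ∀ n, ‖T (x n)‖ ^ 2 + 2 * r * a n ≤ ‖A‖ ^ 2 := fun n => by
    have hid : ‖A (x n)‖ ^ 2 = ‖T (x n)‖ ^ 2 + 2 * (r * a n) + r ^ 2 * ‖S (x n)‖ ^ 2 := by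
      simpa only [A, a, add_apply, smul_apply, norm_mul, he, mul_one, Complex.norm_real,
        Real.norm_of_nonneg hr, mul_assoc, RCLike.re_to_complex, Complex.re_ofReal_mul]
        using norm_add_smul_sq (T (x n)) (S (x n)) ((r : ℂ) * e)
    have hAx : ‖A (x n)‖ ≤ ‖A‖ := by simpa [hx n] using A.le_opNorm (x n)
    nlinarith [norm_nonneg (A (x n))]
  have hsq : ‖T‖ ^ 2 ≤ ‖A‖ ^ 2 := by
    refine le_of_forall_pos_le_add fun ε hε => ?_
    set δ := ε / (1 + 2 * r)
    have hδ : (1 + 2 * r) * δ = ε := mul_div_cancel₀ _ (by positivity)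
    have hTδ : ∀ᶠ n in atTop, ‖T‖ ^ 2 - δ < ‖T (x n)‖ ^ 2 :=
      (hTx.pow 2).eventually_const_lt (sub_lt_self _ (by positivity))
    have haδ : ∀ᶠ n in atTop, -δ < a n :=
      eventually_lt_of_lt_liminf ((neg_neg_of_pos (by positivity)).trans_le hre)
        (isBoundedUnder_of ⟨-(‖T‖ * ‖S‖), fun n =>
          (abs_le.1 (abs_re_mul_inner_apply_le T S (hx n) he)).1⟩)
    obtain ⟨n, hTn, han⟩ := (hTδ.and haδ).exists
    nlinarith [hA n]
  exact (pow_le_pow_iff_left₀ (norm_nonneg _) (norm_nonneg _) two_ne_zero).1 hsq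

end

theorem BJ_orthogonal_iff_exists_seq_general
    {H : Type*} [NormedAddCommGroup H] [InnerProductSpace ℂ H]
    [Nontrivial H] (T S : H →L[ℂ] H) :
    (∀ ξ : ℂ, ‖T‖ ≤ ‖T + ξ • S‖) ↔
      ∀ θ ∈ Set.Ico (0 : ℝ) (2 * Real.pi),
        ∃ x : ℕ → H, (∀ n, ‖x n‖ = 1) ∧
          Tendsto (fun n => ‖T (x n)‖) atTop (𝓝 ‖T‖) ∧
          0 ≤ Filter.liminf
            (fun n => (Complex.exp (θ * Complex.I) *
              @inner ℂ H _ (T (x n)) (S (x n))).re) atTop := by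
  refine ⟨fun hT θ _ => exists_seq_of_forall_le_norm_add_smul T S hT
    (Complex.norm_exp_ofReal_mul_I θ), fun h ξ => ?_⟩
  obtain ⟨θ, hθ, hξ⟩ := Complex.exists_mem_Ico_eq_norm_mul_exp ξ
  obtain ⟨x, hx, hTx, hre⟩ := h θ hθ
  rw [hξ]
  exact le_norm_add_smul_of_seq T S hx hTx (Complex.norm_exp_ofReal_mul_I θ) hre (norm_nonneg ξ)

theorem BJ_orthogonal_iff_exists_seq
    {H : Type*} [NormedAddCommGroup H] [InnerProductSpace ℂ H] [CompleteSpace H]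
    [Nontrivial H] (T S : H →L[ℂ] H) :
    (∀ ξ : ℂ, ‖T‖ ≤ ‖T + ξ • S‖) ↔
      ∀ θ ∈ Set.Ico (0 : ℝ) (2 * Real.pi),
        ∃ x : ℕ → H, (∀ n, ‖x n‖ = 1) ∧
          Tendsto (fun n => ‖T (x n)‖) atTop (𝓝 ‖T‖) ∧
          0 ≤ Filter.liminf
            (fun n => (Complex.exp (θ * Complex.I) *
              @inner ℂ H _ (T (x n)) (S (x n))).re) atTop :=
  BJ_orthogonal_iff_exists_seq_general T S
end
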